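/- arXiv:1105.1880 — 2 statements merged into one kernel-verified Lean document; each statement's English description precedes it below -/
import Mathlib

section
/- Let E be a Hilbert space, F a Banach space, U ⊆ E open, g : U → F a C¹ map with regular value y₀, S = g⁻¹(y₀), and f : U → ℝ a C¹ functional. Suppose x ∈ S is a local extremum of f|_S and f'(x) ≠ 0. Then there exists a nonzero vector e ∈ E orthogonal to the kernel of g'(x) and orthogonal to the kernel of f'(x). -/
/-! The Lagrange multiplier rule, with a multiplier on `f` that cannot vanish because `g'(x)` is
surjective, gives `ker g'(x) ⊆ ker f'(x)`; the Riesz vector of `f'(x)` is then orthogonal to both. -/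

open scoped RealInnerProductSpace Topology

theorem IsLocalExtrOn.of_inter_mem_nhds {α β : Type*} [TopologicalSpace α] [Preorder β]
    {f : α → β} {s t : Set α} {a : α} (hf : IsLocalExtrOn f (s ∩ t) a) (hs : s ∈ 𝓝 a) :
    IsLocalExtrOn f t a := by
  rwa [IsLocalExtrOn, nhdsWithin_inter_of_mem (mem_nhdsWithin_of_mem_nhds hs)] at hf

theorem IsLocalExtrOn.ker_le_ker_of_hasStrictFDerivAt_of_surjective
    {E F : Type*} [NormedAddCommGroup E] [NormedSpace ℝ E] [CompleteSpace E]
    [NormedAddCommGroup F] [NormedSpace ℝ F] [CompleteSpace F]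
    {f : E → F} {φ : E → ℝ} {x₀ : E} {f' : E →L[ℝ] F} {φ' : StrongDual ℝ E}
    (hextr : IsLocalExtrOn φ {x | f x = f x₀} x₀) (hf' : HasStrictFDerivAt f f' x₀)
    (hφ' : HasStrictFDerivAt φ φ' x₀) (hsurj : Function.Surjective f') :
    LinearMap.ker (f' : E →ₗ[ℝ] F) ≤ LinearMap.ker (φ' : E →ₗ[ℝ] ℝ) := by
  obtain ⟨Λ, Λ₀, hne, hrel⟩ := hextr.exists_linear_map_of_hasStrictFDerivAt hf' hφ'
  have hΛ₀ : Λ₀ ≠ 0 := by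
    rintro rfl
    refine hne (Prod.ext (LinearMap.ext fun y => ?_) rfl)
    obtain ⟨v, rfl⟩ := hsurj y
    simpa using hrel v
  intro h hh
  rw [LinearMap.mem_ker, ContinuousLinearMap.coe_coe] at hh ⊢
  simpa [hh, hΛ₀] using hrel h

/-- If `E` is a Hilbert space, `y₀` a regular value of a `C¹` map `g`,
`x ∈ S = g⁻¹(y₀)` a local extremum of `f|_S` with `f'(x) ≠ 0`, then there is a nonzero
vector `e` orthogonal both to `ker g'(x)` and to `ker f'(x)`. -/
theorem critical_point_orthogonal_vector
    {E F : Type*} [NormedAddCommGroup E] [InnerProductSpace ℝ E] [CompleteSpace E]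
    [NormedAddCommGroup F] [NormedSpace ℝ F] [CompleteSpace F]
    {U : Set E} (hU : IsOpen U) {g : E → F} {f : E → ℝ} {y₀ : F}
    (hg : ContDiffOn ℝ 1 g U) (hf : ContDiffOn ℝ 1 f U)
    (hreg : ∀ z ∈ U, g z = y₀ →
      Function.Surjective (fderiv ℝ g z) ∧
      (LinearMap.ker (fderiv ℝ g z : E →ₗ[ℝ] F)).ClosedComplemented)
    {x : E} (hxU : x ∈ U) (hxS : g x = y₀)
    (hext : IsLocalExtrOn f (U ∩ g ⁻¹' {y₀}) x)
    (hf' : fderiv ℝ f x ≠ 0) :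
    ∃ e : E, e ≠ 0 ∧
      (∀ h : E, fderiv ℝ g x h = 0 → ⟪e, h⟫ = 0) ∧
      (∀ h : E, fderiv ℝ f x h = 0 → ⟪e, h⟫ = 0) := by
  have hUx : U ∈ 𝓝 x := hU.mem_nhds hxU
  have hlevel : IsLocalExtrOn f {z | g z = g x} x := by
    rw [hxS]
    exact hext.of_inter_mem_nhds hUx
  have hker : LinearMap.ker (fderiv ℝ g x : E →ₗ[ℝ] F) ≤
      LinearMap.ker (fderiv ℝ f x : E →ₗ[ℝ] ℝ) :=
    hlevel.ker_le_ker_of_hasStrictFDerivAt_of_surjective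
      ((hg.contDiffAt hUx).hasStrictFDerivAt one_ne_zero)
      ((hf.contDiffAt hUx).hasStrictFDerivAt one_ne_zero) (hreg x hxU hxS).1
  refine ⟨(InnerProductSpace.toDual ℝ E).symm (fderiv ℝ f x), by simpa using hf', ?_, ?_⟩
  · intro h hh
    rw [InnerProductSpace.toDual_symm_apply]
    exact hker hh
  · intro h hh
    rwa [InnerProductSpace.toDual_symm_apply]
end

section
/- Let A ∈ B(E,F) be double split with A not surjective (so any generalized inverse A⁺ has nontrivial kernel N(A⁺) ≠ {0}), and let φ ∈ E* be a functional vanishing on N(A) but with φ(e₀) = 1 for some e₀ ∈ E. Then there exist two generalized inverses A⁺ and B of A such that the functionals φ ∘ A⁺ and φ ∘ B in F* are distinct. (Hence the Lagrange multiplier under a non-regular constraint is not unique.) -/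
/-!
A double split operator has a continuous generalized inverse `X`: invert `A` on a complement
of its kernel (open mapping theorem) after projecting onto its range. Every
`B = X + X A W (1 - A X)` is again a generalized inverse, and `φ B - φ X = φ W (1 - A X)`
because `φ X A = φ` when `φ` vanishes on `N(A)`. As `A` is not surjective, `1 - A X ≠ 0`, and a
rank-one `W = ψ ⊗ e₀` with `ψ` a Hahn–Banach functional makes the difference nonzero.
-/

open ContinuousLinearMap

namespace ContinuousLinearMap

section Algebra

variable {R E F G : Type*} [Ring R]
  [TopologicalSpace E] [AddCommGroup E] [Module R E]
  [TopologicalSpace F] [AddCommGroup F] [Module R F]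
  [TopologicalSpace G] [AddCommGroup G] [Module R G]

def IsInnerInverse (A : E →L[R] F) (X : F →L[R] E) : Prop :=
  A ∘L X ∘L A = A

def IsGeneralizedInverse (A : E →L[R] F) (X : F →L[R] E) : Prop :=
  A.IsInnerInverse X ∧ X ∘L A ∘L X = X

variable {A : E →L[R] F} {X : F →L[R] E}

theorem IsInnerInverse.isGeneralizedInverse_comp_comp (hX : A.IsInnerInverse X) :
    A.IsGeneralizedInverse (X ∘L A ∘L X) := by
  unfold IsInnerInverse at hX
  constructor
  · calc A ∘L (X ∘L A ∘L X) ∘L A = (A ∘L X ∘L A) ∘L X ∘L A := by simp only [comp_assoc]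
      _ = A := by rw [hX, hX]
  · calc (X ∘L A ∘L X) ∘L A ∘L X ∘L A ∘L X = X ∘L (A ∘L X ∘L A) ∘L X ∘L A ∘L X := by
          simp only [comp_assoc]
      _ = X ∘L A ∘L X ∘L A ∘L X := by rw [hX]
      _ = X ∘L (A ∘L X ∘L A) ∘L X := by simp only [comp_assoc]
      _ = X ∘L A ∘L X := by rw [hX]

theorem IsInnerInverse.comp_comp_eq_of_ker_le (hX : A.IsInnerInverse X) {φ : E →L[R] G}
    (hφ : A.ker ≤ φ.ker) : φ ∘L X ∘L A = φ := by
  ext e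
  have hker : A (X (A e) - e) = 0 := by
    rw [map_sub, sub_eq_zero]
    exact congr($hX e)
  simpa only [comp_apply, LinearMap.mem_ker, coe_coe, map_sub, sub_eq_zero] using hφ hker

theorem exists_sub_apply_ne_zero_of_not_surjective (X : F →L[R] E)
    (hA : ¬ Function.Surjective A) : ∃ f, f - A (X f) ≠ 0 := by
  contrapose! hA
  exact fun f => ⟨X f, (sub_eq_zero.1 (hA f)).symm⟩

variable [IsTopologicalAddGroup F]

theorem IsInnerInverse.sub_comp_eq_zero (hX : A.IsInnerInverse X) :
    (ContinuousLinearMap.id R F - A ∘L X) ∘L A = 0 := by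
  rw [sub_comp, id_comp, comp_assoc, hX, sub_self]

variable [IsTopologicalAddGroup E]

theorem IsGeneralizedInverse.add_comp_comp_comp_sub (hX : A.IsGeneralizedInverse X)
    (W : F →L[R] E) :
    A.IsGeneralizedInverse (X + X ∘L A ∘L W ∘L (ContinuousLinearMap.id R F - A ∘L X)) := by
  obtain ⟨hAXA, hXAX⟩ := hX
  have hBA : (X + X ∘L A ∘L W ∘L (ContinuousLinearMap.id R F - A ∘L X)) ∘L A = X ∘L A := by
    simp only [add_comp, comp_assoc, hAXA.sub_comp_eq_zero, comp_zero, add_zero]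
  have hXAX' : (X ∘L A) ∘L X = X := hXAX
  constructor
  · show A ∘L _ ∘L A = A
    rw [hBA]
    exact hAXA
  · rw [← comp_assoc, hBA, comp_add]
    simp only [← comp_assoc, hXAX']

end Algebra

section Banach

variable {𝕜 E F : Type*} [NontriviallyNormedField 𝕜]
  [NormedAddCommGroup E] [NormedSpace 𝕜 E] [CompleteSpace E]
  [NormedAddCommGroup F] [NormedSpace 𝕜 F] [CompleteSpace F]

theorem HasRightInverse.of_surjective_of_closedComplemented_ker {f : E →L[𝕜] F}
    (hf : Function.Surjective f) (hker : f.ker.ClosedComplemented) : f.HasRightInverse := by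
  obtain ⟨p, hp⟩ := hker
  have : CompleteSpace f.ker := f.isClosed_ker.completeSpace_coe
  let e := f.equivProdOfSurjectiveOfIsCompl p (LinearMap.range_eq_top.2 hf)
    (LinearMap.range_eq_of_proj hp) (LinearMap.isCompl_of_proj hp)
  exact ⟨(e.symm : F × f.ker →L[𝕜] E) ∘L inl 𝕜 F f.ker,
    fun y => congr(Prod.fst $(e.apply_symm_apply (y, 0)))⟩

theorem exists_isInnerInverse_of_closedComplemented {A : E →L[𝕜] F}
    (hker : A.ker.ClosedComplemented) (hran : A.range.ClosedComplemented) :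
    ∃ X, A.IsInnerInverse X := by
  have : CompleteSpace A.range := hran.isClosed.completeSpace_coe
  obtain ⟨r, hr⟩ := hran
  obtain ⟨S, hS⟩ := HasRightInverse.of_surjective_of_closedComplemented_ker (f := A.rangeRestrict)
    (LinearMap.surjective_rangeRestrict (A : E →ₗ[𝕜] F)) (by rwa [ker_codRestrict])
  refine ⟨S ∘L r, ?_⟩
  ext e
  have hrA : r (A e) = A.rangeRestrict e := hr ⟨A e, _⟩
  simp only [comp_apply, hrA]
  exact congr(Subtype.val $(hS (A.rangeRestrict e)))

end Banach

end ContinuousLinearMap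

/-- If `A` is double split but not surjective, and `φ ∈ E*` vanishes on
`N(A)` with `φ(e₀) = 1` for some `e₀`, then there exist two generalized inverses `A⁺, B`
of `A` with `φ ∘ A⁺ ≠ φ ∘ B`: the Lagrange multiplier under a non-regular constraint is
not unique (ill-posed). -/
theorem lagrange_multiplier_ill_posed
    {E F : Type*} [NormedAddCommGroup E] [NormedSpace ℝ E] [CompleteSpace E]
    [NormedAddCommGroup F] [NormedSpace ℝ F] [CompleteSpace F]
    (A : E →L[ℝ] F)
    (hsplit : IsClosed (LinearMap.range (A : E →ₗ[ℝ] F) : Set F) ∧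
      (LinearMap.ker (A : E →ₗ[ℝ] F)).ClosedComplemented ∧ (LinearMap.range (A : E →ₗ[ℝ] F)).ClosedComplemented)
    (hnotsurj : ¬ Function.Surjective A)
    (φ : E →L[ℝ] ℝ) (hφ : ∀ h : E, A h = 0 → φ h = 0)
    (e₀ : E) (he₀ : φ e₀ = 1) :
    ∃ Ap B : F →L[ℝ] E,
      (A ∘L Ap ∘L A = A ∧ Ap ∘L A ∘L Ap = Ap) ∧
      (A ∘L B ∘L A = A ∧ B ∘L A ∘L B = B) ∧
      φ ∘L Ap ≠ φ ∘L B := by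
  obtain ⟨X₀, hX₀⟩ := exists_isInnerInverse_of_closedComplemented hsplit.2.1 hsplit.2.2
  set X := X₀ ∘L A ∘L X₀
  have hX : A.IsGeneralizedInverse X := hX₀.isGeneralizedInverse_comp_comp
  obtain ⟨f₀, hf₀⟩ := exists_sub_apply_ne_zero_of_not_surjective X hnotsurj
  obtain ⟨ψ, hψ⟩ := SeparatingDual.exists_eq_one (R := ℝ) hf₀
  have hφXA : φ ∘L X ∘L A = φ := hX.1.comp_comp_eq_of_ker_le fun h => hφ h
  refine ⟨X, _, hX, hX.add_comp_comp_comp_sub (ψ.smulRight e₀), fun h => ?_⟩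
  set T := ContinuousLinearMap.id ℝ F - A ∘L X
  have hdiff : φ ∘L ψ.smulRight e₀ ∘L T = 0 :=
    calc φ ∘L ψ.smulRight e₀ ∘L T = (φ ∘L X ∘L A) ∘L ψ.smulRight e₀ ∘L T := by rw [hφXA]
      _ = φ ∘L (X + X ∘L A ∘L ψ.smulRight e₀ ∘L T) - φ ∘L X := by
        rw [comp_add, add_sub_cancel_left]
        simp only [comp_assoc]
      _ = 0 := by rw [← h, sub_self]
  have hT : T f₀ = f₀ - A (X f₀) := rfl
  simpa only [comp_apply, smulRight_apply, hT, hψ, one_smul, he₀, zero_apply, one_ne_zero]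
    using congr($hdiff f₀)
end
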